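/- arXiv:1802.00417 — 2 statements merged into one kernel-verified Lean document; each statement's English description precedes it below -/
import Mathlib

section
/- Every point z ∈ X̄ is of big type or of leaf type. -/
open MvPolynomial

noncomputable section

/-- Index type for the variables `T i j` (`Sum.inl ⟨i, j⟩`) and `S k` (`Sum.inr k`). -/
abbrev VarIdx (r m : ℕ) (nn : Fin (r + 1) → ℕ) : Type :=
  (Σ i : Fin (r + 1), Fin (nn i)) ⊕ Fin m

variable (𝕂 : Type) [Field 𝕂]

/-- The monomial `T_i^{l_i} = ∏_j T_{ij}^{l_{ij}}`. -/
def Tmon (r m : ℕ) (nn : Fin (r + 1) → ℕ)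
    (l : ∀ i : Fin (r + 1), Fin (nn i) → ℕ) (i : Fin (r + 1)) :
    MvPolynomial (VarIdx r m nn) 𝕂 :=
  ∏ j : Fin (nn i), (X (Sum.inl ⟨i, j⟩) : MvPolynomial (VarIdx r m nn) 𝕂) ^ l i j

/-- The map sending a column index of the `(c+2)×(c+2)` matrix defining `g_t`
to the corresponding column index of `A`, namely `0, …, c, c + (t+1)`. -/
def colOf (r c : ℕ) (hcr : c ≤ r) (t : Fin (r - c)) (p : Fin (c + 2)) : Fin (r + 1) :=
  if h : (p : ℕ) ≤ c then ⟨p, by omega⟩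
  else ⟨c + 1 + t, by have := t.isLt; omega⟩

/-- The polynomial `g_t`: the determinant of the `(c+2)×(c+2)` matrix whose first
`c+1` rows are formed by the columns `a_0, …, a_c, a_{c+t}` of `A` (as constant
polynomials) and whose last row is `(T_0^{l_0}, …, T_c^{l_c}, T_{c+t}^{l_{c+t}})`. -/
def gPoly (r c m : ℕ) (hcr : c ≤ r) (nn : Fin (r + 1) → ℕ)
    (l : ∀ i : Fin (r + 1), Fin (nn i) → ℕ)
    (A : Matrix (Fin (c + 1)) (Fin (r + 1)) 𝕂) (t : Fin (r - c)) :
    MvPolynomial (VarIdx r m nn) 𝕂 :=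
  Matrix.det (Matrix.of fun q p : Fin (c + 2) =>
    if h : (q : ℕ) < c + 1 then C (A ⟨q, h⟩ (colOf r c hcr t p))
    else Tmon 𝕂 r m nn l (colOf r c hcr t p))

/-- The ring `R = 𝕂[T_{ij}, S_k] / ⟨g_1, …, g_{r-c}⟩`. -/
abbrev RingAP (r c m : ℕ) (hcr : c ≤ r) (nn : Fin (r + 1) → ℕ)
    (l : ∀ i : Fin (r + 1), Fin (nn i) → ℕ)
    (A : Matrix (Fin (c + 1)) (Fin (r + 1)) 𝕂) : Type :=
  MvPolynomial (VarIdx r m nn) 𝕂 ⧸ Ideal.span (Set.range (gPoly 𝕂 r c m hcr nn l A))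

end

noncomputable section
variable (𝕂 : Type) [Field 𝕂]

/-- A point `z ∈ 𝕂^{n+m}` is of big type if for every `i = 0,…,r` some
coordinate `z_{ij}` vanishes. -/
def BigType (r m : ℕ) (nn : Fin (r + 1) → ℕ) (z : VarIdx r m nn → 𝕂) : Prop :=
  ∀ i : Fin (r + 1), ∃ j : Fin (nn i), z (Sum.inl ⟨i, j⟩) = 0

/-- A point `z ∈ 𝕂^{n+m}` is of leaf type if there is a set `I ⊆ {0,…,r}` with at most
`c` elements such that `z_{ij} = 0` implies `i ∈ I`. -/
def LeafType (r c m : ℕ) (nn : Fin (r + 1) → ℕ) (z : VarIdx r m nn → 𝕂) : Prop :=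
  ∃ I : Finset (Fin (r + 1)), I.card ≤ c ∧
    ∀ (i : Fin (r + 1)) (j : Fin (nn i)), z (Sum.inl ⟨i, j⟩) = 0 → i ∈ I

/-- The Jacobian matrix of `g_1, …, g_{r-c}` evaluated at the point `z`. -/
def Jac (r c m : ℕ) (hcr : c ≤ r) (nn : Fin (r + 1) → ℕ)
    (l : ∀ i : Fin (r + 1), Fin (nn i) → ℕ)
    (A : Matrix (Fin (c + 1)) (Fin (r + 1)) 𝕂) (z : VarIdx r m nn → 𝕂) :
    Matrix (Fin (r - c)) (VarIdx r m nn) 𝕂 :=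
  Matrix.of fun t v =>
    MvPolynomial.eval z (MvPolynomial.pderiv v (gPoly 𝕂 r c m hcr nn l A t))

end

/-! Write `w_i` for the value of `T_i^{l_i}` at `z`. As `a_0, …, a_c` form a basis, there is a
unique `u` with `⟨u, a_q⟩ = w_q` for `q ≤ c`, and expanding `g_t(z)` by the Schur complement of
`[a_0 ⋯ a_c]` turns `g_t(z) = 0` into `w_{c+t} = ⟨u, a_{c+t}⟩`. So `w_i = ⟨u, a_i⟩` for every `i`.
If `u = 0`, every `w_i` vanishes and `z` is of big type. Otherwise the `i` with `w_i = 0` index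
columns of `A` lying in the hyperplane `u^⊥`, so there are at most `c` of them: `z` is of leaf
type. -/

open Matrix Finset

section BorderedMatrix

variable {K : Type*} [Field K] {m : Type*} [Fintype m] [DecidableEq m]

def borderedMatrix (B : Matrix m m K) (x y : m → K) (d : K) : Matrix (m ⊕ Fin 1) (m ⊕ Fin 1) K :=
  fromBlocks B (replicateCol (Fin 1) x) (replicateRow (Fin 1) y) (of fun _ _ => d)

theorem det_borderedMatrix (B : Matrix m m K) [Invertible B] (x y : m → K) (d : K) :
    (borderedMatrix B x y d).det = B.det * (d - (y ᵥ* B⁻¹) ⬝ᵥ x) := by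
  rw [borderedMatrix, det_fromBlocks₁₁, det_fin_one, invOf_eq_nonsing_inv]
  simp [mul_apply, vecMul, dotProduct]

theorem eq_dotProduct_of_det_borderedMatrix_eq_zero {B : Matrix m m K} (hB : IsUnit B.det)
    {x y : m → K} {d : K} (h : (borderedMatrix B x y d).det = 0) :
    d = (y ᵥ* B⁻¹) ⬝ᵥ x := by
  have := invertibleOfIsUnitDet B hB
  rwa [det_borderedMatrix, mul_eq_zero, or_iff_right hB.ne_zero, sub_eq_zero] at h

theorem vecMul_inv_dotProduct_transpose {B : Matrix m m K} (hB : IsUnit B.det) (y : m → K)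
    (q : m) : (y ᵥ* B⁻¹) ⬝ᵥ Bᵀ q = y q := by
  change ((y ᵥ* B⁻¹) ᵥ* B) q = y q
  rw [vecMul_vecMul, nonsing_inv_mul _ hB, vecMul_one]

end BorderedMatrix

section GeneralPosition

variable {K : Type*} [Field K] {m ι : Type*} [Fintype m] {A : Matrix m ι K}

theorem isUnit_det_submatrix_of_injective [DecidableEq m]
    (hA : ∀ s : Finset ι, s.card = Fintype.card m → LinearIndependent K fun j : s => Aᵀ j)
    {b : m → ι} (hb : Function.Injective b) : IsUnit (A.submatrix id b).det := by
  rw [← isUnit_iff_isUnit_det, ← linearIndependent_cols_iff_isUnit]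
  exact (hA (Finset.univ.map ⟨b, hb⟩) (by simp)).comp
    (fun q => ⟨b q, Finset.mem_map_of_mem _ (Finset.mem_univ q)⟩)
    (fun p q h => hb (congrArg Subtype.val h))

theorem card_filter_dotProduct_eq_zero_lt [Fintype ι] [DecidableEq K]
    (hA : ∀ s : Finset ι, s.card = Fintype.card m → LinearIndependent K fun j : s => Aᵀ j)
    {u : m → K} (hu : u ≠ 0) : #{i | u ⬝ᵥ Aᵀ i = 0} < Fintype.card m := by
  by_contra! h
  obtain ⟨s, hs, hcard⟩ := Finset.exists_subset_card_eq h
  have hspan := (hA s hcard).span_eq_top_of_card_eq_finrank' (by simpa using hcard)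
  refine hu (dotProduct_eq_zero_iff.mp fun v => ?_)
  have : Set.range (fun j : s => Aᵀ j) ⊆ LinearMap.ker (dotProductBilin K K u) := by
    rintro _ ⟨j, rfl⟩
    simpa using (Finset.mem_filter.mp (hs j.2)).2
  have := (Submodule.span_le.mpr this) (hspan ▸ Submodule.mem_top : v ∈ _)
  simpa using this

end GeneralPosition

section

variable {𝕂 : Type} [Field 𝕂] {r c m : ℕ} {hcr : c ≤ r} {nn : Fin (r + 1) → ℕ}
  {l : ∀ i : Fin (r + 1), Fin (nn i) → ℕ}

theorem eval_Tmon_eq_zero_iff {i : Fin (r + 1)} (hl : ∀ j, 0 < l i j) (z : VarIdx r m nn → 𝕂) :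
    eval z (Tmon 𝕂 r m nn l i) = 0 ↔ ∃ j, z (Sum.inl ⟨i, j⟩) = 0 := by
  simp [Tmon, Finset.prod_eq_zero_iff, fun j => (hl j).ne']

theorem colOf_castSucc (t : Fin (r - c)) (p : Fin (c + 1)) :
    colOf r c hcr t p.castSucc = p.castLE (by omega) := by
  simp [colOf, Fin.ext_iff, Nat.lt_succ_iff.mp p.isLt]

theorem colOf_last (t : Fin (r - c)) :
    colOf r c hcr t (Fin.last (c + 1)) = ⟨c + 1 + t, by omega⟩ := by
  simp [colOf]

theorem eval_gPoly (A : Matrix (Fin (c + 1)) (Fin (r + 1)) 𝕂) (z : VarIdx r m nn → 𝕂)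
    (t : Fin (r - c)) :
    eval z (gPoly 𝕂 r c m hcr nn l A t) =
      (borderedMatrix (A.submatrix id (Fin.castLE (by omega)))
        (Aᵀ (colOf r c hcr t (Fin.last _)))
        (fun q => eval z (Tmon 𝕂 r m nn l (q.castLE (by omega))))
        (eval z (Tmon 𝕂 r m nn l (colOf r c hcr t (Fin.last _))))).det := by
  rw [gPoly, RingHom.map_det, ← det_submatrix_equiv_self (finSumFinEquiv (m := c + 1) (n := 1))]
  congr 1
  ext (q | q) (p | p) <;>
    simp [borderedMatrix, Fin.is_le, Fin.fin_one_eq_zero, ← colOf_castSucc (hcr := hcr) t] <;> rfl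

theorem exists_eval_Tmon_eq_dotProduct {A : Matrix (Fin (c + 1)) (Fin (r + 1)) 𝕂}
    (hA : ∀ s : Finset (Fin (r + 1)), s.card = c + 1 →
      LinearIndependent 𝕂 fun j : s => A.transpose (j : Fin (r + 1)))
    {z : VarIdx r m nn → 𝕂} (hz : ∀ t, eval z (gPoly 𝕂 r c m hcr nn l A t) = 0) :
    ∃ u : Fin (c + 1) → 𝕂, ∀ i, eval z (Tmon 𝕂 r m nn l i) = u ⬝ᵥ Aᵀ i := by
  have hB : IsUnit (A.submatrix id (Fin.castLE (by omega))).det :=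
    isUnit_det_submatrix_of_injective (by simpa using hA) (Fin.castLE_injective _)
  refine ⟨(fun q => eval z (Tmon 𝕂 r m nn l (q.castLE (by omega)))) ᵥ*
    (A.submatrix id (Fin.castLE (by omega)))⁻¹, fun i => ?_⟩
  rcases lt_or_ge (i : ℕ) (c + 1) with hi | hi
  · obtain ⟨q, rfl⟩ : ∃ q : Fin (c + 1), q.castLE (Nat.succ_le_succ hcr) = i := ⟨⟨i, hi⟩, rfl⟩
    exact (vecMul_inv_dotProduct_transpose hB (fun q => eval z (Tmon 𝕂 r m nn l _)) q).symm
  · obtain ⟨t, rfl⟩ : ∃ t, colOf r c hcr t (Fin.last _) = i :=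
      ⟨⟨i - (c + 1), by omega⟩, by simp only [colOf_last, Fin.ext_iff]; omega⟩
    exact eq_dotProduct_of_det_borderedMatrix_eq_zero hB ((eval_gPoly A z _).symm.trans (hz _))

end

theorem statement_12_general
    (𝕂 : Type) [Field 𝕂]
    (r c m : ℕ) (hcr : c ≤ r)
    (nn : Fin (r + 1) → ℕ)
    (l : ∀ i : Fin (r + 1), Fin (nn i) → ℕ) (hl : ∀ i j, 0 < l i j)
    (A : Matrix (Fin (c + 1)) (Fin (r + 1)) 𝕂)
    (hA : ∀ s : Finset (Fin (r + 1)), s.card = c + 1 →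
      LinearIndependent 𝕂 fun j : s => A.transpose (j : Fin (r + 1)))
    (z : VarIdx r m nn → 𝕂)
    (hz : ∀ t : Fin (r - c), MvPolynomial.eval z (gPoly 𝕂 r c m hcr nn l A t) = 0) :
    BigType 𝕂 r m nn z ∨ LeafType 𝕂 r c m nn z := by
  classical
  obtain ⟨u, hu⟩ := exists_eval_Tmon_eq_dotProduct hA hz
  have hzero (i) : (∃ j, z (Sum.inl ⟨i, j⟩) = 0) ↔ u ⬝ᵥ Aᵀ i = 0 := by
    rw [← hu, eval_Tmon_eq_zero_iff (hl i)]
  rcases eq_or_ne u 0 with rfl | hu0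
  · exact Or.inl fun i => (hzero i).2 (zero_dotProduct _)
  · refine Or.inr ⟨({i | u ⬝ᵥ Aᵀ i = 0} : Finset _), ?_,
      fun i j hij => by simpa using (hzero i).1 ⟨j, hij⟩⟩
    have := card_filter_dotProduct_eq_zero_lt (fun s hs => hA s (by simpa using hs)) hu0
    rwa [Fintype.card_fin, Nat.lt_succ_iff] at this

/-- Every point `z ∈ X̄` (common zero set of `g_1,…,g_{r−c}`) is of
big type or of leaf type. -/
theorem statement_12
    (𝕂 : Type) [Field 𝕂] [IsAlgClosed 𝕂] [CharZero 𝕂]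
    (r c m : ℕ) (hc : 0 < c) (hcr : c ≤ r)
    (nn : Fin (r + 1) → ℕ) (hnn : ∀ i, 0 < nn i)
    (l : ∀ i : Fin (r + 1), Fin (nn i) → ℕ) (hl : ∀ i j, 0 < l i j)
    (A : Matrix (Fin (c + 1)) (Fin (r + 1)) 𝕂)
    (hA : ∀ s : Finset (Fin (r + 1)), s.card = c + 1 →
      LinearIndependent 𝕂 fun j : s => A.transpose (j : Fin (r + 1)))
    (z : VarIdx r m nn → 𝕂)
    (hz : ∀ t : Fin (r - c), MvPolynomial.eval z (gPoly 𝕂 r c m hcr nn l A t) = 0) :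
    BigType 𝕂 r m nn z ∨ LeafType 𝕂 r c m nn z :=
  statement_12_general 𝕂 r c m hcr nn l hl A hA z hz
end

section
/- Assume r > c and fix i ∈ {0,…,r} and distinct indices j_1, j_2 ∈ {1,…,n_i}. (a) There exists a point z ∈ X̄ whose set of nonzero coordinates is exactly {z_{ij_1}, z_{ij_2}} if and only if n_i ≥ 3. (b) If moreover the exponent data is irredundant and n_i ≥ 3, then every z ∈ X̄ whose set of nonzero coordinates is exactly {z_{ij_1}, z_{ij_2}} satisfies rank J(z) = r−c if and only if r = c+1, n_i = 3 and l_{ij} = 1 for the unique index j ∉ {j_1,j_2}. -/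
open MvPolynomial

/-!
Expanding `g_t` along its last row writes it as `∑ₚ e_{t,p} T_{colOf t p}^{l}`, where every
cofactor `e_{t,p}` is a maximal minor of `A`, hence nonzero. At a point `z` whose support is
exactly `{z_{ij₁}, z_{ij₂}}`, every monomial `T_{i'}^{l_{i'}}` with `i' ≠ i` vanishes, while
`T_i^{l_i}` vanishes iff row `i` has a third variable; as `c < r`, the index `i` occurs in some
`g_t`, which gives (a).

For (b), irredundancy makes every `∂T_{i'}^{l_{i'}}/∂T_{i'j}` with `i' ≠ i` vanish at `z`, and
`∂T_i^{l_i}/∂T_{ij}` survives at `z` only for the third index `j`, and only when `n_i = 3` and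
`l_{ij} = 1`. So `J(z)` has at most one nonzero column: its rank is at most `1`, and it is `1`
exactly in that case.
-/

namespace Matrix

variable {m n K : Type*} [Fintype m] [Fintype n] [Field K]

theorem rank_pos_iff_exists_ne_zero (M : Matrix m n K) : 0 < M.rank ↔ ∃ i j, M i j ≠ 0 := by
  rw [Nat.pos_iff_ne_zero, Ne, rank_eq_finrank_span_cols, Submodule.finrank_eq_zero,
    Submodule.span_eq_bot, Set.forall_mem_range]
  simp [funext_iff, exists_comm (α := m)]

theorem rank_le_one_of_forall_ne_col_eq_zero (M : Matrix m n K) (v₀ : n)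
    (h : ∀ v ≠ v₀, ∀ t, M t v = 0) : M.rank ≤ 1 := by
  rw [← rank_transpose]
  refine (rank_le_card_of_support_subset Mᵀ {v₀} fun v hv => ?_).trans_eq
    (Finset.card_singleton v₀)
  by_contra hne
  exact hv (funext (h v (by simpa using hne)))

end Matrix

theorem Fintype.exists_ne_ne_iff_two_lt_card {α : Type*} [Fintype α] {a b : α} (hab : a ≠ b) :
    (∃ d, d ≠ a ∧ d ≠ b) ↔ 2 < Fintype.card α := by
  classical
  constructor
  · rintro ⟨d, hda, hdb⟩
    exact Fintype.two_lt_card_iff.2 ⟨a, b, d, hab, hda.symm, hdb.symm⟩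
  · intro h
    obtain ⟨d, -, hd⟩ := Finset.exists_mem_notMem_of_card_lt_card
      (s := {a, b}) (t := Finset.univ) (Finset.card_le_two.trans_lt h)
    exact ⟨d, by simpa [not_or] using hd⟩

theorem Fintype.card_eq_three_iff_forall_ne_ne {α : Type*} [Fintype α] {a b d : α}
    (hab : a ≠ b) (hda : d ≠ a) (hdb : d ≠ b) :
    Fintype.card α = 3 ↔ ∀ e, e ≠ a → e ≠ b → e = d := by
  classical
  have hcard : ({a, b, d} : Finset α).card = 3 := by
    rw [Finset.card_insert_of_notMem (by simp [hab, hda.symm]), Finset.card_pair hdb.symm]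
  constructor
  · intro h e hea heb
    have he : e ∈ ({a, b, d} : Finset α) := by
      rw [Finset.eq_univ_of_card _ (hcard.trans h.symm)]
      exact Finset.mem_univ e
    simpa [hea, heb] using he
  · intro h
    refine le_antisymm ?_ (hcard ▸ Finset.card_le_univ _)
    rw [← hcard]
    refine Finset.card_le_card fun e _ => ?_
    by_cases hea : e = a
    · simp [hea]
    by_cases heb : e = b
    · simp [heb]
    simp [h e hea heb]

section Monomials

variable {𝕂 : Type} [Field 𝕂] {r m : ℕ} {nn : Fin (r + 1) → ℕ}

theorem VarIdx.inl_ne_inl_of_ne {i i' : Fin (r + 1)} (h : i ≠ i') (j : Fin (nn i))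
    (j' : Fin (nn i')) : (Sum.inl ⟨i, j⟩ : VarIdx r m nn) ≠ Sum.inl ⟨i', j'⟩ := by
  rintro ⟨⟩
  exact h rfl

variable (r m nn) in
noncomputable def rowExp (i : Fin (r + 1)) (f : Fin (nn i) → ℕ) : VarIdx r m nn →₀ ℕ :=
  ∑ j, Finsupp.single (Sum.inl ⟨i, j⟩) (f j)

@[simp]
theorem rowExp_inl_self (i : Fin (r + 1)) (f : Fin (nn i) → ℕ) (j : Fin (nn i)) :
    rowExp r m nn i f (Sum.inl ⟨i, j⟩) = f j := by
  simp [rowExp, Finset.sum_apply', Finsupp.single_apply]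

theorem rowExp_inl_of_ne {i i' : Fin (r + 1)} (h : i' ≠ i) (f : Fin (nn i) → ℕ)
    (j : Fin (nn i')) : rowExp r m nn i f (Sum.inl ⟨i', j⟩) = 0 := by
  rw [rowExp, Finset.sum_apply']
  exact Finset.sum_eq_zero fun j' _ =>
    Finsupp.single_eq_of_ne (VarIdx.inl_ne_inl_of_ne h.symm j' j).symm

@[simp]
theorem rowExp_inr (i : Fin (r + 1)) (f : Fin (nn i) → ℕ) (k : Fin m) :
    rowExp r m nn i f (Sum.inr k) = 0 := by
  simp [rowExp, Finset.sum_apply']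

theorem rowExp_prod (i : Fin (r + 1)) (f : Fin (nn i) → ℕ) (z : VarIdx r m nn → 𝕂) :
    (rowExp r m nn i f).prod (fun v e => z v ^ e) = ∏ j, z (Sum.inl ⟨i, j⟩) ^ f j := by
  rw [rowExp, ← Finsupp.prod_finsetSum_index (fun _ => pow_zero _) (fun _ _ _ => pow_add _ _ _)]
  exact Finset.prod_congr rfl fun j _ => Finsupp.prod_single_index (pow_zero _)

variable (l : ∀ i : Fin (r + 1), Fin (nn i) → ℕ)

theorem Tmon_eq_monomial (i : Fin (r + 1)) :
    Tmon 𝕂 r m nn l i = monomial (rowExp r m nn i (l i)) 1 := by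
  rw [Tmon, rowExp, monomial_sum_one]
  exact Finset.prod_congr rfl fun j _ => X_pow_eq_monomial

theorem eval_Tmon (i : Fin (r + 1)) (z : VarIdx r m nn → 𝕂) :
    eval z (Tmon 𝕂 r m nn l i) = ∏ j, z (Sum.inl ⟨i, j⟩) ^ l i j := by
  rw [Tmon_eq_monomial, eval_monomial, one_mul, rowExp_prod]

theorem pderiv_Tmon_of_rowExp_eq_zero (i : Fin (r + 1)) {v : VarIdx r m nn}
    (h : rowExp r m nn i (l i) v = 0) : pderiv v (Tmon 𝕂 r m nn l i) = 0 := by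
  rw [Tmon_eq_monomial, pderiv_monomial, h, Nat.cast_zero, mul_zero, monomial_zero]

theorem eval_pderiv_Tmon (i : Fin (r + 1)) (j₀ : Fin (nn i)) (z : VarIdx r m nn → 𝕂) :
    eval z (pderiv (Sum.inl ⟨i, j₀⟩) (Tmon 𝕂 r m nn l i)) =
      l i j₀ * ∏ j, z (Sum.inl ⟨i, j⟩) ^ (l i j - if j = j₀ then 1 else 0) := by
  have hexp : rowExp r m nn i (l i) - Finsupp.single (Sum.inl ⟨i, j₀⟩) 1 =
      rowExp r m nn i fun j => l i j - if j = j₀ then 1 else 0 := by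
    ext (⟨i', j⟩ | k)
    · rcases eq_or_ne i' i with rfl | hi'
      · by_cases hj : j = j₀ <;> simp [hj]
      · simp [rowExp_inl_of_ne hi', VarIdx.inl_ne_inl_of_ne hi'.symm]
    · simp
  rw [Tmon_eq_monomial, pderiv_monomial, eval_monomial, hexp, rowExp_prod, rowExp_inl_self,
    one_mul]

theorem eval_Tmon_ne_zero_iff (i : Fin (r + 1)) (z : VarIdx r m nn → 𝕂) :
    eval z (Tmon 𝕂 r m nn l i) ≠ 0 ↔ ∀ j, z (Sum.inl ⟨i, j⟩) = 0 → l i j = 0 := by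
  simp [eval_Tmon, Finset.prod_ne_zero_iff, pow_eq_zero_iff']

theorem eval_pderiv_Tmon_ne_zero_iff [CharZero 𝕂] (i : Fin (r + 1)) (j₀ : Fin (nn i))
    (z : VarIdx r m nn → 𝕂) :
    eval z (pderiv (Sum.inl ⟨i, j₀⟩) (Tmon 𝕂 r m nn l i)) ≠ 0 ↔
      l i j₀ ≠ 0 ∧ ∀ j, z (Sum.inl ⟨i, j⟩) = 0 → l i j ≤ if j = j₀ then 1 else 0 := by
  simp [eval_pderiv_Tmon, Finset.prod_ne_zero_iff, pow_eq_zero_iff', Nat.sub_eq_zero_iff_le]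

end Monomials

section Coefficients

variable {𝕂 : Type} [Field 𝕂] {r c m : ℕ} {nn : Fin (r + 1) → ℕ}

theorem colOf_injective (hcr : c ≤ r) (t : Fin (r - c)) :
    Function.Injective (colOf r c hcr t) := by
  intro p p' h
  have h' := congrArg Fin.val h
  unfold colOf at h'
  split_ifs at h' <;> (apply Fin.ext; simp only at h'; omega)

theorem exists_colOf_eq (hcr : c ≤ r) (hrc : c < r) (i : Fin (r + 1)) :
    ∃ t p, colOf r c hcr t p = i := by
  by_cases hi : (i : ℕ) ≤ c
  · exact ⟨⟨0, by omega⟩, ⟨i, by omega⟩, by rw [colOf, dif_pos hi]⟩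
  · refine ⟨⟨i - c - 1, by omega⟩, Fin.last (c + 1), ?_⟩
    rw [colOf, dif_neg (by simp)]
    ext
    simp only
    omega

def ColsInGeneralPosition (A : Matrix (Fin (c + 1)) (Fin (r + 1)) 𝕂) : Prop :=
  ∀ s : Finset (Fin (r + 1)), s.card = c + 1 →
    LinearIndependent 𝕂 fun j : s => A.transpose (j : Fin (r + 1))

theorem det_submatrix_ne_zero_of_injective (A : Matrix (Fin (c + 1)) (Fin (r + 1)) 𝕂)
    (hA : ColsInGeneralPosition A) {f : Fin (c + 1) → Fin (r + 1)} (hf : Function.Injective f) :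
    (A.submatrix id f).det ≠ 0 := by
  set s := Finset.univ.map ⟨f, hf⟩
  have hcols : LinearIndependent 𝕂 fun p => A.transpose (f p) :=
    (hA s (by simp [s])).comp (fun p => ⟨f p, by simp [s]⟩)
      fun p p' h => hf (congrArg Subtype.val h)
  rw [← isUnit_iff_ne_zero, ← Matrix.isUnit_iff_isUnit_det,
    ← Matrix.linearIndependent_cols_iff_isUnit]
  exact hcols

/-- The cofactor of the entry `T_{colOf t p}^{l}` in the last row of the matrix defining `g_t`. -/
noncomputable def gCoeff (hcr : c ≤ r) (A : Matrix (Fin (c + 1)) (Fin (r + 1)) 𝕂)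
    (t : Fin (r - c)) (p : Fin (c + 2)) : 𝕂 :=
  (-1) ^ (c + 1 + p : ℕ) * (A.submatrix id (colOf r c hcr t ∘ p.succAbove)).det

theorem gCoeff_ne_zero (hcr : c ≤ r) (A : Matrix (Fin (c + 1)) (Fin (r + 1)) 𝕂)
    (hA : ColsInGeneralPosition A) (t : Fin (r - c)) (p : Fin (c + 2)) : gCoeff hcr A t p ≠ 0 :=
  mul_ne_zero (pow_ne_zero _ (neg_ne_zero.2 one_ne_zero))
    (det_submatrix_ne_zero_of_injective A hA
      ((colOf_injective hcr t).comp (Fin.succAbove_right_injective)))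

theorem gPoly_eq_sum (hcr : c ≤ r) (l : ∀ i : Fin (r + 1), Fin (nn i) → ℕ)
    (A : Matrix (Fin (c + 1)) (Fin (r + 1)) 𝕂) (t : Fin (r - c)) :
    gPoly 𝕂 r c m hcr nn l A t =
      ∑ p, C (gCoeff hcr A t p) * Tmon 𝕂 r m nn l (colOf r c hcr t p) := by
  rw [gPoly, Matrix.det_succ_row _ (Fin.last (c + 1))]
  refine Finset.sum_congr rfl fun p _ => ?_
  have hminor : (Matrix.of fun q p : Fin (c + 2) =>
      if h : (q : ℕ) < c + 1 then C (A ⟨q, h⟩ (colOf r c hcr t p))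
      else Tmon 𝕂 r m nn l (colOf r c hcr t p)).submatrix
        (Fin.last (c + 1)).succAbove p.succAbove =
      (C : 𝕂 →+* MvPolynomial (VarIdx r m nn) 𝕂).mapMatrix
        (A.submatrix id (colOf r c hcr t ∘ p.succAbove)) := by
    refine Matrix.ext fun q p' => ?_
    simp [Fin.succAbove_last, Fin.is_le]
  rw [hminor, ← RingHom.map_det, gCoeff, Matrix.of_apply, dif_neg (by simp), Fin.val_last]
  simp only [map_mul, map_pow, map_neg, map_one]
  ring

theorem sum_gCoeff_mul_ne_zero_iff (hcr : c ≤ r) (A : Matrix (Fin (c + 1)) (Fin (r + 1)) 𝕂)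
    (hA : ColsInGeneralPosition A) (t : Fin (r - c)) {F : Fin (r + 1) → 𝕂} {i : Fin (r + 1)}
    (hF : ∀ i' ≠ i, F i' = 0) :
    ∑ p, gCoeff hcr A t p * F (colOf r c hcr t p) ≠ 0 ↔
      (∃ p, colOf r c hcr t p = i) ∧ F i ≠ 0 := by
  by_cases hi : ∃ p, colOf r c hcr t p = i
  · obtain ⟨p, hp⟩ := hi
    rw [Fintype.sum_eq_single p fun p' hp' => by
      rw [hF _ fun h => hp' (colOf_injective hcr t (h.trans hp.symm)), mul_zero], hp]
    simpa [gCoeff_ne_zero hcr A hA] using fun _ => ⟨p, hp⟩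
  · rw [Finset.sum_eq_zero fun p _ => by rw [hF _ fun h => hi ⟨p, h⟩, mul_zero]]
    simp [hi]

end Coefficients

section Jacobian

variable {𝕂 : Type} [Field 𝕂] {r c m : ℕ} {nn : Fin (r + 1) → ℕ} (hcr : c ≤ r)
  (l : ∀ i : Fin (r + 1), Fin (nn i) → ℕ) (A : Matrix (Fin (c + 1)) (Fin (r + 1)) 𝕂)

theorem eval_gPoly_ne_zero_iff
    (hA : ColsInGeneralPosition A) {z : VarIdx r m nn → 𝕂} {i : Fin (r + 1)}
    (hTmon : ∀ i' ≠ i, eval z (Tmon 𝕂 r m nn l i') = 0) (t : Fin (r - c)) :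
    eval z (gPoly 𝕂 r c m hcr nn l A t) ≠ 0 ↔
      (∃ p, colOf r c hcr t p = i) ∧ eval z (Tmon 𝕂 r m nn l i) ≠ 0 := by
  rw [gPoly_eq_sum, map_sum]
  simp only [map_mul, eval_C]
  exact sum_gCoeff_mul_ne_zero_iff hcr A hA t hTmon

theorem Jac_inl_ne_zero_iff (hA : ColsInGeneralPosition A)
    (z : VarIdx r m nn → 𝕂) (t : Fin (r - c)) (i : Fin (r + 1)) (j : Fin (nn i)) :
    Jac 𝕂 r c m hcr nn l A z t (Sum.inl ⟨i, j⟩) ≠ 0 ↔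
      (∃ p, colOf r c hcr t p = i) ∧ eval z (pderiv (Sum.inl ⟨i, j⟩) (Tmon 𝕂 r m nn l i)) ≠ 0 := by
  have hF : ∀ i' ≠ i, eval z (pderiv (Sum.inl ⟨i, j⟩) (Tmon 𝕂 r m nn l i')) = 0 := fun i' hi' => by
    rw [pderiv_Tmon_of_rowExp_eq_zero l i' (rowExp_inl_of_ne hi'.symm _ _), map_zero]
  rw [Jac, Matrix.of_apply, gPoly_eq_sum, map_sum, map_sum]
  simp only [pderiv_C_mul, map_mul, eval_C]
  exact sum_gCoeff_mul_ne_zero_iff hcr A hA t hF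

theorem Jac_inr_eq_zero (z : VarIdx r m nn → 𝕂) (t : Fin (r - c)) (k : Fin m) :
    Jac 𝕂 r c m hcr nn l A z t (Sum.inr k) = 0 := by
  rw [Jac, Matrix.of_apply, gPoly_eq_sum, map_sum, map_sum]
  refine Finset.sum_eq_zero fun p _ => ?_
  rw [pderiv_C_mul, pderiv_Tmon_of_rowExp_eq_zero l _ (rowExp_inr _ _ k), mul_zero, map_zero]

end Jacobian

section PairSupport

variable {𝕂 : Type} [Field 𝕂] {r m : ℕ} {nn : Fin (r + 1) → ℕ}

def HasPairSupport (z : VarIdx r m nn → 𝕂) (i : Fin (r + 1)) (j₁ j₂ : Fin (nn i)) : Prop :=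
  ∀ v, z v ≠ 0 ↔ v = Sum.inl ⟨i, j₁⟩ ∨ v = Sum.inl ⟨i, j₂⟩

theorem hasPairSupport_indicator (i : Fin (r + 1)) (j₁ j₂ : Fin (nn i)) :
    HasPairSupport (m := m)
      (fun v => if v = Sum.inl ⟨i, j₁⟩ ∨ v = Sum.inl ⟨i, j₂⟩ then (1 : 𝕂) else 0) i j₁ j₂ := by
  intro v
  dsimp only
  split_ifs with h <;> simp [h]

end PairSupport

namespace HasPairSupport

variable {𝕂 : Type} [Field 𝕂] {r c m : ℕ} {nn : Fin (r + 1) → ℕ} (hcr : c ≤ r)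
  (l : ∀ i : Fin (r + 1), Fin (nn i) → ℕ) (A : Matrix (Fin (c + 1)) (Fin (r + 1)) 𝕂)
  {z : VarIdx r m nn → 𝕂} {i : Fin (r + 1)} {j₁ j₂ : Fin (nn i)}

theorem apply_inl_self_eq_zero_iff (hz : HasPairSupport z i j₁ j₂) (j : Fin (nn i)) :
    z (Sum.inl ⟨i, j⟩) = 0 ↔ j ≠ j₁ ∧ j ≠ j₂ := by
  simpa [not_or] using (hz (Sum.inl ⟨i, j⟩)).not

theorem apply_inl_of_ne (hz : HasPairSupport z i j₁ j₂) {i' : Fin (r + 1)} (h : i' ≠ i)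
    (j : Fin (nn i')) : z (Sum.inl ⟨i', j⟩) = 0 := by
  by_contra hne
  rcases (hz _).1 hne with h' | h' <;> exact VarIdx.inl_ne_inl_of_ne h _ _ h'

theorem eval_Tmon_of_ne (hz : HasPairSupport z i j₁ j₂) (hnn : ∀ i, 0 < nn i)
    (hl : ∀ i j, 0 < l i j) {i' : Fin (r + 1)} (h : i' ≠ i) : eval z (Tmon 𝕂 r m nn l i') = 0 := by
  by_contra hne
  exact (hl i' _).ne' ((eval_Tmon_ne_zero_iff l i' z).1 hne ⟨0, hnn i'⟩ (hz.apply_inl_of_ne h _))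

theorem eval_Tmon_self_eq_zero_iff (hz : HasPairSupport z i j₁ j₂) (hl : ∀ i j, 0 < l i j)
    (hj : j₁ ≠ j₂) : eval z (Tmon 𝕂 r m nn l i) = 0 ↔ 3 ≤ nn i := by
  have h : (∃ d, d ≠ j₁ ∧ d ≠ j₂) ↔ 3 ≤ nn i :=
    (Fintype.exists_ne_ne_iff_two_lt_card hj).trans (by rw [Fintype.card_fin]; rfl)
  rw [← not_iff_not, ← Ne, eval_Tmon_ne_zero_iff, ← h]
  simp [hz.apply_inl_self_eq_zero_iff, (hl i _).ne']

theorem eval_pderiv_Tmon_of_ne [CharZero 𝕂] (hz : HasPairSupport z i j₁ j₂)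
    (hirr : ∀ i, 2 ≤ ∑ j, l i j) {i' : Fin (r + 1)} (h : i' ≠ i) (j₀ : Fin (nn i')) :
    eval z (pderiv (Sum.inl ⟨i', j₀⟩) (Tmon 𝕂 r m nn l i')) = 0 := by
  by_contra hne
  obtain ⟨-, hle⟩ := (eval_pderiv_Tmon_ne_zero_iff l i' j₀ z).1 hne
  have hsum : ∑ j, l i' j ≤ 1 := calc
    ∑ j, l i' j ≤ ∑ j, if j = j₀ then 1 else 0 :=
      Finset.sum_le_sum fun j _ => hle j (hz.apply_inl_of_ne h j)
    _ = 1 := by simp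
  have := hirr i'
  omega

theorem eval_pderiv_Tmon_self_ne_zero_iff [CharZero 𝕂] (hz : HasPairSupport z i j₁ j₂)
    (hl : ∀ i j, 0 < l i j) (h3 : 3 ≤ nn i) (hj : j₁ ≠ j₂) (j₀ : Fin (nn i)) :
    eval z (pderiv (Sum.inl ⟨i, j₀⟩) (Tmon 𝕂 r m nn l i)) ≠ 0 ↔
      j₀ ≠ j₁ ∧ j₀ ≠ j₂ ∧ nn i = 3 ∧ l i j₀ = 1 := by
  rw [eval_pderiv_Tmon_ne_zero_iff]
  simp only [hz.apply_inl_self_eq_zero_iff]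
  constructor
  · rintro ⟨-, hle⟩
    have hthird : ∀ j, j ≠ j₁ → j ≠ j₂ → j = j₀ ∧ l i j = 1 := fun j h1 h2 => by
      have hj := hle j ⟨h1, h2⟩
      have := hl i j
      split_ifs at hj with hj₀ <;> omega
    obtain ⟨j₃, h1, h2⟩ := (Fintype.exists_ne_ne_iff_two_lt_card hj).2
      (by rw [Fintype.card_fin]; exact h3)
    obtain ⟨rfl, hl₃⟩ := hthird j₃ h1 h2
    have hcard := (Fintype.card_eq_three_iff_forall_ne_ne hj h1 h2).2 fun j h1 h2 =>
      (hthird j h1 h2).1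
    exact ⟨h1, h2, by simpa using hcard, hl₃⟩
  · rintro ⟨h1, h2, hcard, hl₀⟩
    refine ⟨by omega, fun j ⟨hj1, hj2⟩ => ?_⟩
    obtain rfl := (Fintype.card_eq_three_iff_forall_ne_ne hj h1 h2).1 (by simpa using hcard) j
      hj1 hj2
    simp [hl₀]

theorem forall_eval_gPoly_eq_zero_iff (hz : HasPairSupport z i j₁ j₂)
    (hA : ColsInGeneralPosition A) (hrc : c < r) (hnn : ∀ i, 0 < nn i) (hl : ∀ i j, 0 < l i j)
    (hj : j₁ ≠ j₂) :
    (∀ t, eval z (gPoly 𝕂 r c m hcr nn l A t) = 0) ↔ 3 ≤ nn i := by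
  have key := eval_gPoly_ne_zero_iff hcr l A hA fun i' => hz.eval_Tmon_of_ne l hnn hl
  rw [← hz.eval_Tmon_self_eq_zero_iff l hl hj]
  constructor
  · intro h
    by_contra hne
    obtain ⟨t, p, hp⟩ := exists_colOf_eq hcr hrc i
    exact (key t).2 ⟨⟨p, hp⟩, hne⟩ (h t)
  · intro h t
    by_contra hne
    exact ((key t).1 hne).2 h

theorem exists_third_of_Jac_ne_zero [CharZero 𝕂] (hz : HasPairSupport z i j₁ j₂)
    (hA : ColsInGeneralPosition A) (hl : ∀ i j, 0 < l i j) (hirr : ∀ i, 2 ≤ ∑ j, l i j)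
    (h3 : 3 ≤ nn i) (hj : j₁ ≠ j₂) {t : Fin (r - c)} {v : VarIdx r m nn}
    (h : Jac 𝕂 r c m hcr nn l A z t v ≠ 0) :
    ∃ j₀, v = Sum.inl ⟨i, j₀⟩ ∧ j₀ ≠ j₁ ∧ j₀ ≠ j₂ ∧ nn i = 3 ∧ l i j₀ = 1 := by
  rcases v with ⟨i', j₀⟩ | k
  · have hderiv := ((Jac_inl_ne_zero_iff hcr l A hA z t i' j₀).1 h).2
    rcases eq_or_ne i' i with rfl | hi'
    · exact ⟨j₀, rfl, (hz.eval_pderiv_Tmon_self_ne_zero_iff l hl h3 hj j₀).1 hderiv⟩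
    · exact absurd (hz.eval_pderiv_Tmon_of_ne l hirr hi' j₀) hderiv
  · exact absurd (Jac_inr_eq_zero hcr l A z t k) h

theorem rank_Jac_le_one [CharZero 𝕂] (hz : HasPairSupport z i j₁ j₂)
    (hA : ColsInGeneralPosition A) (hl : ∀ i j, 0 < l i j) (hirr : ∀ i, 2 ≤ ∑ j, l i j)
    (h3 : 3 ≤ nn i) (hj : j₁ ≠ j₂) :
    (Jac 𝕂 r c m hcr nn l A z).rank ≤ 1 := by
  rcases Nat.eq_zero_or_pos (Jac 𝕂 r c m hcr nn l A z).rank with h0 | hpos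
  · exact h0.trans_le zero_le_one
  obtain ⟨t, v, hv⟩ := (Matrix.rank_pos_iff_exists_ne_zero _).1 hpos
  obtain ⟨j₀, rfl, h1, h2, hcard, -⟩ := hz.exists_third_of_Jac_ne_zero hcr l A hA hl hirr h3 hj hv
  refine Matrix.rank_le_one_of_forall_ne_col_eq_zero _ (Sum.inl ⟨i, j₀⟩) fun v hv t => ?_
  by_contra hne
  obtain ⟨j, rfl, hj1, hj2, -⟩ := hz.exists_third_of_Jac_ne_zero hcr l A hA hl hirr h3 hj hne
  obtain rfl := (Fintype.card_eq_three_iff_forall_ne_ne hj h1 h2).1 (by simpa using hcard) j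
    hj1 hj2
  exact hv rfl

theorem rank_Jac_pos_iff [CharZero 𝕂] (hz : HasPairSupport z i j₁ j₂)
    (hA : ColsInGeneralPosition A) (hrc : c < r) (hl : ∀ i j, 0 < l i j)
    (hirr : ∀ i, 2 ≤ ∑ j, l i j) (h3 : 3 ≤ nn i) (hj : j₁ ≠ j₂) :
    0 < (Jac 𝕂 r c m hcr nn l A z).rank ↔ nn i = 3 ∧ ∀ j, j ≠ j₁ → j ≠ j₂ → l i j = 1 := by
  constructor
  · intro hpos
    obtain ⟨t, v, hv⟩ := (Matrix.rank_pos_iff_exists_ne_zero _).1 hpos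
    obtain ⟨j₀, -, h1, h2, hcard, hl₀⟩ := hz.exists_third_of_Jac_ne_zero hcr l A hA hl hirr h3 hj hv
    refine ⟨hcard, fun j hj1 hj2 => ?_⟩
    obtain rfl := (Fintype.card_eq_three_iff_forall_ne_ne hj h1 h2).1 (by simpa using hcard) j
      hj1 hj2
    exact hl₀
  · rintro ⟨hcard, hl₁⟩
    obtain ⟨j₀, h1, h2⟩ := (Fintype.exists_ne_ne_iff_two_lt_card hj).2
      (by rw [Fintype.card_fin]; exact h3)
    obtain ⟨t, p, hp⟩ := exists_colOf_eq hcr hrc i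
    refine (Matrix.rank_pos_iff_exists_ne_zero _).2 ⟨t, Sum.inl ⟨i, j₀⟩, ?_⟩
    exact (Jac_inl_ne_zero_iff hcr l A hA z t i j₀).2 ⟨⟨p, hp⟩,
      (hz.eval_pderiv_Tmon_self_ne_zero_iff l hl h3 hj j₀).2 ⟨h1, h2, hcard, hl₁ j₀ h1 h2⟩⟩

end HasPairSupport

theorem statement_18_general
    (𝕂 : Type) [Field 𝕂] [CharZero 𝕂]
    (r c m : ℕ) (hcr : c ≤ r)
    (nn : Fin (r + 1) → ℕ) (hnn : ∀ i, 0 < nn i)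
    (l : ∀ i : Fin (r + 1), Fin (nn i) → ℕ) (hl : ∀ i j, 0 < l i j)
    (A : Matrix (Fin (c + 1)) (Fin (r + 1)) 𝕂)
    (hA : ∀ s : Finset (Fin (r + 1)), s.card = c + 1 →
      LinearIndependent 𝕂 fun j : s => A.transpose (j : Fin (r + 1)))
    (hrc : c < r) (i : Fin (r + 1)) (j₁ j₂ : Fin (nn i)) (hj : j₁ ≠ j₂) :
    ((∃ z : VarIdx r m nn → 𝕂,
        (∀ t : Fin (r - c), MvPolynomial.eval z (gPoly 𝕂 r c m hcr nn l A t) = 0) ∧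
        (∀ v : VarIdx r m nn, z v ≠ 0 ↔ (v = Sum.inl ⟨i, j₁⟩ ∨ v = Sum.inl ⟨i, j₂⟩))) ↔
      3 ≤ nn i) ∧
    ((∀ i' : Fin (r + 1), 2 ≤ ∑ j' : Fin (nn i'), l i' j') → 3 ≤ nn i →
      ((∀ z : VarIdx r m nn → 𝕂,
          (∀ t : Fin (r - c), MvPolynomial.eval z (gPoly 𝕂 r c m hcr nn l A t) = 0) →
          (∀ v : VarIdx r m nn, z v ≠ 0 ↔ (v = Sum.inl ⟨i, j₁⟩ ∨ v = Sum.inl ⟨i, j₂⟩)) →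
          (Jac 𝕂 r c m hcr nn l A z).rank = r - c) ↔
        (r = c + 1 ∧ nn i = 3 ∧ ∀ j : Fin (nn i), j ≠ j₁ → j ≠ j₂ → l i j = 1))) := by
  have hz₀ := hasPairSupport_indicator (𝕂 := 𝕂) (m := m) i j₁ j₂
  have mem_iff := fun (z : VarIdx r m nn → 𝕂) (hz : HasPairSupport z i j₁ j₂) =>
    hz.forall_eval_gPoly_eq_zero_iff hcr l A hA hrc hnn hl hj
  refine ⟨⟨fun ⟨z, hg, hz⟩ => (mem_iff z hz).1 hg, fun h3 => ⟨_, (mem_iff _ hz₀).2 h3, hz₀⟩⟩,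
    fun hirr h3 => ⟨fun hfull => ?_, fun ⟨hr, hcond⟩ z _ hz => ?_⟩⟩
  · have hrank := hfull _ ((mem_iff _ hz₀).2 h3) hz₀
    have hle := hz₀.rank_Jac_le_one hcr l A hA hl hirr h3 hj
    obtain ⟨hcard, hl₁⟩ := (hz₀.rank_Jac_pos_iff hcr l A hA hrc hl hirr h3 hj).1 (by omega)
    exact ⟨by omega, hcard, hl₁⟩
  · have hle := HasPairSupport.rank_Jac_le_one hcr l A hz hA hl hirr h3 hj
    have hpos := (HasPairSupport.rank_Jac_pos_iff hcr l A hz hA hrc hl hirr h3 hj).2 hcond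
    omega

/-- Assume `r > c` and fix `i` and distinct `j₁ ≠ j₂`.  (a) There is
a point of `X̄` whose nonzero coordinates are exactly `z_{ij₁}, z_{ij₂}` iff `n_i ≥ 3`.
(b) If moreover the data is irredundant and `n_i ≥ 3`, then every such point of `X̄` has
full-rank Jacobian iff `r = c+1`, `n_i = 3` and `l_{ij} = 1` for the index
`j ∉ {j₁, j₂}`. -/
theorem statement_18
    (𝕂 : Type) [Field 𝕂] [IsAlgClosed 𝕂] [CharZero 𝕂]
    (r c m : ℕ) (hc : 0 < c) (hcr : c ≤ r)
    (nn : Fin (r + 1) → ℕ) (hnn : ∀ i, 0 < nn i)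
    (l : ∀ i : Fin (r + 1), Fin (nn i) → ℕ) (hl : ∀ i j, 0 < l i j)
    (A : Matrix (Fin (c + 1)) (Fin (r + 1)) 𝕂)
    (hA : ∀ s : Finset (Fin (r + 1)), s.card = c + 1 →
      LinearIndependent 𝕂 fun j : s => A.transpose (j : Fin (r + 1)))
    (hrc : c < r) (i : Fin (r + 1)) (j₁ j₂ : Fin (nn i)) (hj : j₁ ≠ j₂) :
    ((∃ z : VarIdx r m nn → 𝕂,
        (∀ t : Fin (r - c), MvPolynomial.eval z (gPoly 𝕂 r c m hcr nn l A t) = 0) ∧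
        (∀ v : VarIdx r m nn, z v ≠ 0 ↔ (v = Sum.inl ⟨i, j₁⟩ ∨ v = Sum.inl ⟨i, j₂⟩))) ↔
      3 ≤ nn i) ∧
    ((∀ i' : Fin (r + 1), 2 ≤ ∑ j' : Fin (nn i'), l i' j') → 3 ≤ nn i →
      ((∀ z : VarIdx r m nn → 𝕂,
          (∀ t : Fin (r - c), MvPolynomial.eval z (gPoly 𝕂 r c m hcr nn l A t) = 0) →
          (∀ v : VarIdx r m nn, z v ≠ 0 ↔ (v = Sum.inl ⟨i, j₁⟩ ∨ v = Sum.inl ⟨i, j₂⟩)) →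
          (Jac 𝕂 r c m hcr nn l A z).rank = r - c) ↔
        (r = c + 1 ∧ nn i = 3 ∧ ∀ j : Fin (nn i), j ≠ j₁ → j ≠ j₂ → l i j = 1))) :=
  statement_18_general 𝕂 r c m hcr nn hnn l hl A hA hrc i j₁ j₂ hj
end
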